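/- arXiv:1109.0363 — 3 statements merged into one kernel-verified Lean document; each statement's English description precedes it below -/
import Mathlib

section
/- Let b_Dir : ℝ → ℝ be the indicator function of the irrationals. For every x ∈ ℝ and every ε > 0, the set of continuous functions X : [0,ε] → ℝ satisfying X(t) = x + ∫₀ᵗ b_Dir(X(s)) ds for all t ∈ [0,ε] is infinite. (Solutions are obtained by following X(t) = x + t and branching to a constant at any time t₀ ∈ [0,ε) with x + t₀ ∈ ℚ.) -/
/-!
Off the null set `ℚ - x`, the point `x + s` is irrational, so `bDir (x + s) = 1` for almost every
`s`. Hence `t ↦ x + t` solves the equation, and so does the path that follows it up to a time `t₀`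
with `x + t₀ ∈ ℚ` and then stops: afterwards the integrand is `bDir (x + t₀) = 0`. There are
infinitely many such branching times in `(0, ε)`, and the corresponding paths differ at `t = ε`.
-/

open MeasureTheory intervalIntegral

/-- The Dirichlet function: indicator of the irrationals. -/
noncomputable def bDir : ℝ → ℝ := Set.indicator {x : ℝ | Irrational x} 1

open Set

lemma bDir_of_irrational {y : ℝ} (h : Irrational y) : bDir y = 1 :=
  indicator_of_mem h 1

lemma bDir_of_not_irrational {y : ℝ} (h : ¬Irrational y) : bDir y = 0 :=
  indicator_of_notMem h 1

lemma ae_irrational_add (x : ℝ) : ∀ᵐ s : ℝ, Irrational (x + s) := by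
  have hsub : {s : ℝ | ¬Irrational (x + s)} ⊆ range fun q : ℚ => (q : ℝ) - x := by
    intro s hs
    obtain ⟨q, hq⟩ := not_not.1 hs
    exact ⟨q, show (q : ℝ) - x = s by linarith⟩
  filter_upwards [((countable_range _).mono hsub).ae_notMem volume] with s hs
  simpa using hs

lemma infinite_setOf_ratCast_mem_Ioo {a b : ℝ} (hab : a < b) :
    {q : ℚ | (q : ℝ) ∈ Ioo a b}.Infinite := by
  obtain ⟨q₁, haq₁, hq₁b⟩ := exists_rat_btwn hab
  obtain ⟨q₂, hq₁q₂, hq₂b⟩ := exists_rat_btwn hq₁b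
  refine (Ioo_infinite (by exact_mod_cast hq₁q₂)).mono fun q hq => ?_
  have hq' : (q₁ : ℝ) < q ∧ (q : ℝ) < q₂ := by exact_mod_cast hq
  exact ⟨haq₁.trans hq'.1, hq'.2.trans hq₂b⟩

def branchSolution (x t₀ t : ℝ) : ℝ := x + min t t₀

lemma continuous_branchSolution (x t₀ : ℝ) : Continuous (branchSolution x t₀) :=
  continuous_const.add (continuous_id.min continuous_const)

lemma branchSolution_of_le {x t₀ t : ℝ} (h : t₀ ≤ t) : branchSolution x t₀ t = x + t₀ := by
  rw [branchSolution, min_eq_right h]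

lemma bDir_branchSolution_ae_eq {x t₀ : ℝ} (hrat : ¬Irrational (x + t₀)) :
    (fun s => bDir (branchSolution x t₀ s)) =ᵐ[volume] (Iic t₀).indicator 1 := by
  filter_upwards [ae_irrational_add x] with s hs
  rcases le_or_gt s t₀ with hst | hts
  · rw [branchSolution, min_eq_left hst, bDir_of_irrational hs, indicator_of_mem (mem_Iic.2 hst), Pi.one_apply]
  · rw [branchSolution_of_le hts.le, bDir_of_not_irrational hrat,
      indicator_of_notMem (notMem_Iic.2 hts)]

lemma branchSolution_eq_add_integral {x t₀ t : ℝ} (ht₀ : 0 ≤ t₀) (hrat : ¬Irrational (x + t₀))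
    (ht : 0 ≤ t) :
    branchSolution x t₀ t = x + ∫ s in (0:ℝ)..t, bDir (branchSolution x t₀ s) := by
  have hint : ∫ s in (0:ℝ)..t, bDir (branchSolution x t₀ s) = min t t₀ := calc
    _ = ∫ s in (0:ℝ)..t, (Iic t₀).indicator 1 s :=
      integral_congr_ae ((bDir_branchSolution_ae_eq hrat).mono fun s hs _ => hs)
    _ = volume.real (Ioc 0 t ∩ Iic t₀) := by
      rw [integral_of_le ht, integral_indicator_one measurableSet_Iic,
        measureReal_restrict_apply measurableSet_Iic, inter_comm]
    _ = min t t₀ := by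
      rw [Ioc_inter_Iic, Real.volume_real_Ioc_of_le (le_min ht ht₀), sub_zero]
  rw [hint, branchSolution]

/-- For every `x ∈ ℝ` and `ε > 0`, there are infinitely many continuous solutions on `[0, ε]`
of the integral equation `X t = x + ∫₀ᵗ bDir (X s) ds`. (Solutions are identified with their
restrictions to `[0, ε]`.) -/
theorem stmt2 (x ε : ℝ) (hε : 0 < ε) :
    {f : Set.Icc (0:ℝ) ε → ℝ | ∃ X : ℝ → ℝ,
      ContinuousOn X (Set.Icc (0:ℝ) ε) ∧
      (∀ t ∈ Set.Icc (0:ℝ) ε, X t = x + ∫ s in (0:ℝ)..t, bDir (X s)) ∧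
      f = (Set.Icc (0:ℝ) ε).restrict X}.Infinite := by
  refine infinite_of_injOn_mapsTo
    (f := fun q : ℚ => (Icc 0 ε).restrict (branchSolution x (q - x))) ?_ ?_
    (infinite_setOf_ratCast_mem_Ioo (lt_add_of_pos_right x hε))
  · intro q hq r hr hqr
    have hqr_ε := congrFun hqr ⟨ε, right_mem_Icc.2 hε.le⟩
    change branchSolution x (q - x) ε = branchSolution x (r - x) ε at hqr_ε
    rw [branchSolution_of_le (by linarith [hq.2]), branchSolution_of_le (by linarith [hr.2])]
      at hqr_ε
    exact_mod_cast (by linarith : (q : ℝ) = r)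
  · rintro q ⟨hxq, -⟩
    have hrat : ¬Irrational (x + (q - x)) := by simp
    exact ⟨branchSolution x (q - x), (continuous_branchSolution x _).continuousOn,
      fun t ht => branchSolution_eq_add_integral (by linarith) hrat ht.1, rfl⟩
end

section
/- Let H = ℓ²(ℕ, ℝ), let (αₙ) be positive reals with Σₙ αₙ² < ∞, let b_Dir be the indicator function of the irrationals and B_Dir(x) = Σₙ αₙ b_Dir(xₙ) eₙ. Let x = (xₙ) ∈ H and suppose that for each n the continuous function Xₙ : [0,∞) → ℝ satisfies Xₙ(t) = xₙ + ∫₀ᵗ αₙ b_Dir(Xₙ(s)) ds for all t ≥ 0. Then for every t ≥ 0 the sequence X(t) := (Xₙ(t))ₙ belongs to H, the map t ↦ X(t) is continuous from [0,∞) to H, and X satisfies X(t) = x + ∫₀ᵗ B_Dir(X(s)) ds for all t ≥ 0, where the integral is a Bochner integral in H. -/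
/-!
Since `|b_Dir| ≤ 1`, the integral equation makes each coordinate `Xₙ` Lipschitz with constant
`|αₙ|` on `[0, ∞)`. Hence `X(t) - x` is dominated coordinatewise by `t |α|`, which lies in `ℓ²`,
and `t ↦ X(t)` is Lipschitz into `ℓ²` with constant `‖α‖`. The map `s ↦ B_Dir(X(s))` is strongly
measurable, being the `ℓ²`-limit of its finite coordinate truncations, and bounded by `‖α‖`, so
it is Bochner integrable; the integral equation in `ℓ²` then holds because evaluation of a
coordinate is a continuous linear functional, which commutes with the integral.
-/

open MeasureTheory intervalIntegral

open Set Filter ENNReal NNReal Interval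

lemma norm_bDir_le_one (y : ℝ) : ‖bDir y‖ ≤ 1 :=
  (norm_indicator_le_norm_self _ y).trans_eq norm_one

lemma measurable_bDir : Measurable bDir :=
  measurable_const.indicator (countable_range ((↑) : ℚ → ℝ)).measurableSet.compl

theorem memℓp_two_of_summable_sq {ι : Type*} {f : ι → ℝ} (hf : Summable fun i => f i ^ 2) :
    Memℓp f 2 :=
  memℓp_gen (by simpa [Real.rpow_two] using hf)

theorem IntervalIntegrable.of_norm_le_const {E : Type*} [NormedAddCommGroup E] {φ : ℝ → E}
    {C a b : ℝ}
    (hφ : AEStronglyMeasurable φ (volume.restrict (Ι a b))) (hC : ∀ s, ‖φ s‖ ≤ C) :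
    IntervalIntegrable φ volume a b :=
  intervalIntegrable_const.mono_fun' hφ (ae_of_all _ hC)

theorem lipschitzOnWith_of_eq_add_integral {E : Type*} [NormedAddCommGroup E] [NormedSpace ℝ E]
    {F φ : ℝ → E} {a : ℝ} {c : E} {C : ℝ≥0}
    (hφ : AEStronglyMeasurable φ (volume.restrict (Ici a))) (hC : ∀ s, ‖φ s‖ ≤ C)
    (hF : ∀ t, a ≤ t → F t = c + ∫ s in a..t, φ s) :
    LipschitzOnWith C F (Ici a) := by
  have hint : ∀ t, a ≤ t → IntervalIntegrable φ volume a t := fun t ht =>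
    .of_norm_le_const (hφ.mono_measure (Measure.restrict_mono
      (by rw [uIoc_of_le ht]; exact fun u hu => hu.1.le) le_rfl)) hC
  refine LipschitzOnWith.of_dist_le_mul fun s hs t ht => ?_
  rw [dist_eq_norm, Real.dist_eq, hF s hs, hF t ht, add_sub_add_left_eq_sub,
    integral_interval_sub_left (hint s hs) (hint t ht)]
  exact norm_integral_le_of_norm_le_const fun u _ => hC u

namespace lp

variable {ι : Type*} {E : ι → Type*} [∀ i, NormedAddCommGroup (E i)] {p : ℝ≥0∞} [Fact (1 ≤ p)]

theorem exists_lipschitzWith_of_apply {T : Type*} [PseudoMetricSpace T] {Z : T → ∀ i, E i}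
    {t₀ : T} (h₀ : Memℓp (Z t₀) p) (K : lp (fun _ : ι => ℝ) p)
    (hZ : ∀ i, LipschitzWith ‖K i‖₊ fun t => Z t i) :
    ∃ Y : T → lp E p, (∀ t, ⇑(Y t) = Z t) ∧ LipschitzWith ‖K‖₊ Y := by
  have hp : p ≠ 0 := (zero_lt_one.trans_le (Fact.out : 1 ≤ p)).ne'
  have hmem : ∀ t, Memℓp (Z t) p := fun t => by
    have hdiff : Memℓp (Z t - Z t₀) p :=
      ((lp.memℓp K).norm.const_mul (dist t t₀)).mono fun i => by
        simpa [mul_comm, ← dist_eq_norm] using (hZ i).dist_le_mul t t₀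
    simpa using h₀.add hdiff
  refine ⟨fun t => ⟨Z t, hmem t⟩, fun t => rfl, LipschitzWith.of_dist_le_mul fun s t => ?_⟩
  calc dist (⟨Z s, hmem s⟩ : lp E p) ⟨Z t, hmem t⟩
      ≤ ‖dist s t • K‖ := by
        rw [dist_eq_norm]
        refine norm_mono hp fun i => ?_
        rw [coeFn_sub, Pi.sub_apply, ← dist_eq_norm, coeFn_smul, Pi.smul_apply, norm_smul,
          Real.norm_of_nonneg dist_nonneg, mul_comm]
        exact (hZ i).dist_le_mul s t
    _ = ‖K‖₊ * dist s t := by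
        rw [norm_const_smul hp, Real.norm_of_nonneg dist_nonneg, mul_comm, coe_nnnorm]

theorem aestronglyMeasurable_of_apply [Countable ι] {β : Type*} [MeasurableSpace β]
    {μ : Measure β} (hp : p ≠ ∞) {F : β → lp E p}
    (hF : ∀ i, AEStronglyMeasurable (fun b => F b i) μ) : AEStronglyMeasurable F μ := by
  classical
  exact aestronglyMeasurable_of_tendsto_ae atTop
    (fun s => Finset.aestronglyMeasurable_fun_sum s fun i _ =>
      (isometry_single i).continuous.comp_aestronglyMeasurable (hF i))
    (ae_of_all _ fun b => lp.hasSum_single hp (F b))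

theorem intervalIntegral_apply [∀ i, NormedSpace ℝ (E i)] [∀ i, CompleteSpace (E i)]
    {F : ℝ → lp E p} {a b : ℝ} (hF : IntervalIntegrable F volume a b) (i : ι) :
    (∫ s in a..b, F s) i = ∫ s in a..b, F s i :=
  ((evalCLM ℝ E p i).intervalIntegral_comp_comm hF).symm

end lp

theorem stmt4_general (α : ℕ → ℝ) (hsum : Summable fun n => (α n) ^ 2)
    (B : lp (fun _ : ℕ => ℝ) 2 → lp (fun _ : ℕ => ℝ) 2)
    (hB : ∀ x : lp (fun _ : ℕ => ℝ) 2, ∀ n : ℕ, B x n = α n * bDir (x n))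
    (x : lp (fun _ : ℕ => ℝ) 2)
    (X : ℕ → ℝ → ℝ)
    (hXcont : ∀ n, ContinuousOn (X n) (Set.Ici (0 : ℝ)))
    (hXeq : ∀ n, ∀ t : ℝ, 0 ≤ t →
      X n t = x n + ∫ s in (0:ℝ)..t, α n * bDir (X n s)) :
    ∃ Y : ℝ → lp (fun _ : ℕ => ℝ) 2,
      (∀ t : ℝ, 0 ≤ t → ∀ n : ℕ, Y t n = X n t) ∧
      ContinuousOn Y (Set.Ici (0 : ℝ)) ∧
      ∀ t : ℝ, 0 ≤ t → Y t = x + ∫ s in (0:ℝ)..t, B (Y s) := by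
  set αℓ : lp (fun _ : ℕ => ℝ) 2 := ⟨α, memℓp_two_of_summable_sq hsum⟩
  have hbound : ∀ n y, ‖α n * bDir y‖ ≤ ‖αℓ n‖ := fun n y => by
    simpa [norm_mul] using mul_le_of_le_one_right (norm_nonneg (α n)) (norm_bDir_le_one y)
  have hXlip : ∀ n, LipschitzOnWith ‖αℓ n‖₊ (X n) (Ici 0) := fun n =>
    lipschitzOnWith_of_eq_add_integral ((measurable_bDir.comp_aemeasurable
      ((hXcont n).aemeasurable measurableSet_Ici)).const_mul (α n)).aestronglyMeasurable
      (fun s => hbound n (X n s)) (hXeq n)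
  have hZ : ∀ n, LipschitzWith ‖αℓ n‖₊ fun t => X n (max t 0) := fun n => by
    simpa [Function.comp_def] using lipschitzOnWith_univ.mp ((hXlip n).comp
      (LipschitzWith.id.max_const 0).lipschitzOnWith fun t _ => le_max_right t 0)
  have hX₀ : ∀ n, X n 0 = x n := fun n => by simpa using hXeq n 0 le_rfl
  obtain ⟨Y, hYapp, hYlip⟩ :=
    lp.exists_lipschitzWith_of_apply (t₀ := 0) (by simpa [hX₀] using lp.memℓp x) αℓ hZ
  have hY : ∀ t, 0 ≤ t → ∀ n, Y t n = X n t := fun t ht n => by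
    rw [hYapp, max_eq_left ht]
  refine ⟨Y, hY, hYlip.continuous.continuousOn, fun t ht => ?_⟩
  have hBY : IntervalIntegrable (fun s => B (Y s)) volume 0 t := by
    refine .of_norm_le_const (lp.aestronglyMeasurable_of_apply ofNat_ne_top fun n => ?_)
      fun s => lp.norm_mono two_ne_zero fun n => hB (Y s) n ▸ hbound n _
    simp_rw [hB]
    exact ((measurable_bDir.comp ((lp.evalCLM ℝ _ 2 n).continuous.comp
      hYlip.continuous).measurable).const_mul (α n)).aestronglyMeasurable
  ext n
  rw [lp.coeFn_add, Pi.add_apply, lp.intervalIntegral_apply hBY, hY t ht n, hXeq n t ht]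
  congr 1
  refine integral_congr fun s hs => ?_
  rw [hB, hY s (uIcc_of_le ht ▸ hs).1]

/-- Let `H = ℓ²(ℕ, ℝ)`, `(αₙ)` positive with `Σ αₙ² < ∞`, and `B_Dir x = Σₙ αₙ bDir(xₙ) eₙ`.
If `x ∈ H` and for each `n` the continuous function `Xₙ : [0,∞) → ℝ` satisfies
`Xₙ(t) = xₙ + ∫₀ᵗ αₙ bDir(Xₙ(s)) ds`, then the sequence `X(t) = (Xₙ(t))ₙ` belongs to `H`
for each `t ≥ 0`, `t ↦ X(t)` is continuous from `[0,∞)` to `H`, and it satisfies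
`X(t) = x + ∫₀ᵗ B_Dir(X(s)) ds` (Bochner integral in `H`) for all `t ≥ 0`. -/
theorem stmt4 (α : ℕ → ℝ) (hα : ∀ n, 0 < α n) (hsum : Summable fun n => (α n) ^ 2)
    (B : lp (fun _ : ℕ => ℝ) 2 → lp (fun _ : ℕ => ℝ) 2)
    (hB : ∀ x : lp (fun _ : ℕ => ℝ) 2, ∀ n : ℕ, B x n = α n * bDir (x n))
    (x : lp (fun _ : ℕ => ℝ) 2)
    (X : ℕ → ℝ → ℝ)
    (hXcont : ∀ n, ContinuousOn (X n) (Set.Ici (0 : ℝ)))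
    (hXeq : ∀ n, ∀ t : ℝ, 0 ≤ t →
      X n t = x n + ∫ s in (0:ℝ)..t, α n * bDir (X n s)) :
    ∃ Y : ℝ → lp (fun _ : ℕ => ℝ) 2,
      (∀ t : ℝ, 0 ≤ t → ∀ n : ℕ, Y t n = X n t) ∧
      ContinuousOn Y (Set.Ici (0 : ℝ)) ∧
      ∀ t : ℝ, 0 ≤ t → Y t = x + ∫ s in (0:ℝ)..t, B (Y s) :=
  stmt4_general α hsum B hB x X hXcont hXeq
end

section
/- Let λ > 0, let b_Dir be the indicator function of the irrationals, and let x ∈ ℝ with x ≠ 1/λ. Then the function X(t) = e^{−λt} x + (1 − e^{−λt})/λ = 1/λ + e^{−λt}(x − 1/λ) is continuous, strictly monotone, and satisfies the mild integral equation X(t) = e^{−λt} x + ∫₀ᵗ e^{−λ(t−s)} b_Dir(X(s)) ds for all t ≥ 0 (since X is strictly monotone, X(s) is irrational for a.e. s, so b_Dir(X(s)) = 1 a.e.). -/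
open MeasureTheory intervalIntegral

/-- For `λ > 0` and `x ≠ 1/λ`, the function `X t = e^{-λt} x + (1 - e^{-λt})/λ` is continuous,
strictly monotone, and satisfies the mild integral equation
`X t = e^{-λt} x + ∫₀ᵗ e^{-λ(t-s)} bDir (X s) ds` for all `t ≥ 0`. -/
theorem stmt8 (lam x : ℝ) (hlam : 0 < lam) (hx : x ≠ 1 / lam) :
    Continuous (fun t : ℝ => Real.exp (-lam * t) * x + (1 - Real.exp (-lam * t)) / lam) ∧
    (StrictMono (fun t : ℝ => Real.exp (-lam * t) * x + (1 - Real.exp (-lam * t)) / lam) ∨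
     StrictAnti (fun t : ℝ => Real.exp (-lam * t) * x + (1 - Real.exp (-lam * t)) / lam)) ∧
    ∀ t : ℝ, 0 ≤ t →
      Real.exp (-lam * t) * x + (1 - Real.exp (-lam * t)) / lam =
        Real.exp (-lam * t) * x +
          ∫ s in (0:ℝ)..t, Real.exp (-lam * (t - s)) *
            bDir (Real.exp (-lam * s) * x + (1 - Real.exp (-lam * s)) / lam) := by
  set X : ℝ → ℝ := fun t : ℝ => Real.exp (-lam * t) * x + (1 - Real.exp (-lam * t)) / lam with hX
  have hlam' : lam ≠ 0 := ne_of_gt hlam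
  have hrw : ∀ t, X t = 1 / lam + Real.exp (-lam * t) * (x - 1 / lam) := by
    intro t; simp only [hX]; field_simp; ring
  have hcont : Continuous X := by
    apply Continuous.add
    · exact (Real.continuous_exp.comp (continuous_const.mul continuous_id)).mul continuous_const
    · exact (continuous_const.sub (Real.continuous_exp.comp (continuous_const.mul continuous_id))).div_const _
  refine ⟨hcont, ?_, ?_⟩
  · rcases lt_or_gt_of_ne hx with h | h
    · left
      intro a b hab
      show X a < X b
      rw [hrw a, hrw b]
      have he : Real.exp (-lam * b) < Real.exp (-lam * a) :=
        Real.exp_lt_exp.mpr (by nlinarith)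
      nlinarith
    · right
      intro a b hab
      show X b < X a
      rw [hrw a, hrw b]
      have he : Real.exp (-lam * b) < Real.exp (-lam * a) :=
        Real.exp_lt_exp.mpr (by nlinarith)
      nlinarith
  · intro t ht
    have hinj : Function.Injective X := by
      intro a b hab
      rw [hrw, hrw] at hab
      have hx0 : x - 1 / lam ≠ 0 := sub_ne_zero.mpr hx
      have : Real.exp (-lam * a) = Real.exp (-lam * b) :=
        mul_right_cancel₀ hx0 (add_left_cancel hab)
      have := Real.exp_injective this
      have := mul_left_cancel₀ (neg_ne_zero.mpr hlam') this
      exact this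
    -- the set where X s is rational is countable hence null
    have hcnt : Set.Countable {s : ℝ | ¬ Irrational (X s)} := by
      have : {s : ℝ | ¬ Irrational (X s)} = X ⁻¹' (Set.range ((↑) : ℚ → ℝ)) := by
        ext s; simp [Irrational]
      rw [this]
      exact (Set.countable_range _).preimage hinj
    have hae : ∀ᵐ s ∂(volume : Measure ℝ), bDir (X s) = 1 := by
      have h0 : (volume : Measure ℝ) {s : ℝ | ¬ Irrational (X s)} = 0 :=
        hcnt.measure_zero _
      filter_upwards [measure_eq_zero_iff_ae_notMem.mp h0] with s hs
      have : Irrational (X s) := by simpa using hs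
      simp [bDir, Set.indicator_of_mem, this]
    have hIcong : (∫ s in (0:ℝ)..t, Real.exp (-lam * (t - s)) * bDir (X s)) =
        ∫ s in (0:ℝ)..t, Real.exp (-lam * (t - s)) := by
      apply intervalIntegral.integral_congr_ae
      filter_upwards [hae] with s hs _
      rw [hs, mul_one]
    rw [show (fun s : ℝ => Real.exp (-lam * s) * x + (1 - Real.exp (-lam * s)) / lam) = X from rfl] at *
    rw [hIcong]
    have hval : (∫ s in (0:ℝ)..t, Real.exp (-lam * (t - s))) = (1 - Real.exp (-lam * t)) / lam := by
      have : ∀ s : ℝ, Real.exp (-lam * (t - s)) = Real.exp (-lam * t) * Real.exp (lam * s) := by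
        intro s; rw [← Real.exp_add]; ring_nf
      simp_rw [this]
      rw [intervalIntegral.integral_const_mul]
      rw [intervalIntegral.integral_comp_mul_left Real.exp hlam']
      rw [integral_exp]
      rw [neg_mul, Real.exp_neg, smul_eq_mul]
      rw [mul_zero, Real.exp_zero]
      field_simp
    rw [hval]
end
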